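/- arXiv:1510.05374 — 2 statements merged into one kernel-verified Lean document; each statement's English description precedes it below -/
import Mathlib

section
/- The elements J_i := (T_{i-1}^{-1} T_{i-2}^{-1} ⋯ T_1^{-1}) · (T_0 T_1 ⋯ T_n) · (T_{n-1} T_{n-2} ⋯ T_i) for i = 1, …, n pairwise commute: J_i J_j = J_j J_i for all 1 ≤ i, j ≤ n. -/
/-!
Write `X_i = T_i⁻¹ ⋯ T_1⁻¹ T_0 T_1 ⋯ T_i` and `Y_i = T_i ⋯ T_{n-1} T_n T_{n-1} ⋯ T_i`, so
that `J_{i+1} = X_i Y_{i+1}`, `X_{i+1} = T_{i+1}⁻¹ X_i T_{i+1}` and `Y_i = T_i Y_{i+1} T_i`.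
Starting from `T_0` and `T_n`, the braid relations propagate the length-four relation
`x t x t = t x t x` to the pairs `(X_i, T_{i+1})` and `(Y_{i+1}, T_i)`.
With `z = X_{i-1} T_i Y_{i+1}` we get `J_i = z T_i` and `J_{i+1} = T_i⁻¹ z`, while
`z² = (X_{i-1} T_i X_{i-1}) (Y_{i+1} T_i Y_{i+1})` commutes with `T_i`; hence `J_i` and `J_{i+1}`
commute. Finally `J_{j+1} = T_j⁻¹ J_j T_j⁻¹` and `T_j` commutes with `J_i` for `i < j < n`, so
induction on `j` gives `J_i J_j = J_j J_i`.
-/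

/-- The ordered product `T a * T (a+1) * ⋯ * T b` (equal to `1` when `b < a`). -/
def upProd {G : Type*} [Monoid G] (T : ℕ → G) (a b : ℕ) : G :=
  ((List.range (b + 1 - a)).map fun k => T (a + k)).prod

/-- The ordered product `T b * T (b-1) * ⋯ * T a` (equal to `1` when `b < a`). -/
def downProd {G : Type*} [Monoid G] (T : ℕ → G) (b a : ℕ) : G :=
  ((List.range (b + 1 - a)).map fun k => T (b - k)).prod

theorem range'_append_of_le {a b c : ℕ} (hab : a ≤ b + 1) (hbc : b ≤ c) :
    List.range' a (b + 1 - a) ++ List.range' (b + 1) (c + 1 - (b + 1)) =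
      List.range' a (c + 1 - a) := by
  have h := List.range'_append (s := a) (m := b + 1 - a) (n := c - b) (step := 1)
  rwa [show a + 1 * (b + 1 - a) = b + 1 by omega, show b + 1 - a + (c - b) = c + 1 - a by omega,
    ← Nat.add_sub_add_right c 1 b] at h

section OrderedProducts
variable {G : Type*} [Monoid G] (T : ℕ → G)

theorem upProd_eq_prod_range' (a b : ℕ) :
    upProd T a b = ((List.range' a (b + 1 - a)).map T).prod := by
  simp only [upProd, List.range'_eq_map_range, List.map_map, Function.comp_def]

theorem downProd_eq_prod_reverse (b a : ℕ) :
    downProd T b a = ((List.range' a (b + 1 - a)).map T).reverse.prod := by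
  rw [← List.map_reverse, List.reverse_range', List.map_map, downProd]
  congr 1
  refine List.map_congr_left fun k hk => ?_
  simp only [List.mem_range] at hk
  simp only [Function.comp_apply]
  congr 1
  omega

theorem upProd_of_lt {a b : ℕ} (h : b < a) : upProd T a b = 1 := by
  simp [upProd, Nat.sub_eq_zero_of_le h]

theorem downProd_of_lt {a b : ℕ} (h : b < a) : downProd T b a = 1 := by
  simp [downProd, Nat.sub_eq_zero_of_le h]

theorem upProd_self (a : ℕ) : upProd T a a = T a := by
  simp [upProd]

theorem downProd_self (a : ℕ) : downProd T a a = T a := by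
  simp [downProd]

theorem upProd_mul_upProd {a b c : ℕ} (hab : a ≤ b + 1) (hbc : b ≤ c) :
    upProd T a b * upProd T (b + 1) c = upProd T a c := by
  simp only [upProd_eq_prod_range', ← List.prod_append, ← List.map_append,
    range'_append_of_le hab hbc]

theorem downProd_mul_downProd {a b c : ℕ} (hab : a ≤ b + 1) (hbc : b ≤ c) :
    downProd T c (b + 1) * downProd T b a = downProd T c a := by
  simp only [downProd_eq_prod_reverse, ← List.prod_append, ← List.reverse_append,
    ← List.map_append, range'_append_of_le hab hbc]

theorem upProd_succ_top {a b : ℕ} (h : a ≤ b + 1) :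
    upProd T a (b + 1) = upProd T a b * T (b + 1) := by
  rw [← upProd_mul_upProd T h le_self_add, upProd_self]

theorem upProd_eq_mul_succ_bot {a b : ℕ} (h : a ≤ b) :
    upProd T a b = T a * upProd T (a + 1) b := by
  rw [← upProd_mul_upProd T le_self_add h, upProd_self]

theorem downProd_eq_succ_mul {a b : ℕ} (h : a ≤ b) :
    downProd T b a = downProd T b (a + 1) * T a := by
  rw [← downProd_mul_downProd T le_self_add h, downProd_self]

theorem commute_upProd {c : G} {a b : ℕ} (h : ∀ k, a ≤ k → k ≤ b → Commute c (T k)) :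
    Commute c (upProd T a b) := by
  rw [upProd_eq_prod_range']
  refine Commute.list_prod_right _ _ fun x hx => ?_
  obtain ⟨k, hk, rfl⟩ := List.mem_map.1 hx
  rw [List.mem_range'_1] at hk
  exact h k hk.1 (by omega)

theorem commute_downProd {c : G} {a b : ℕ} (h : ∀ k, a ≤ k → k ≤ b → Commute c (T k)) :
    Commute c (downProd T b a) := by
  rw [downProd_eq_prod_reverse]
  refine Commute.list_prod_right _ _ fun x hx => ?_
  obtain ⟨k, hk, rfl⟩ := List.mem_map.1 (List.mem_reverse.1 hx)
  rw [List.mem_range'_1] at hk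
  exact h k hk.1 (by omega)

end OrderedProducts

theorem downProd_inv {G : Type*} [Group G] (T : ℕ → G) (b a : ℕ) :
    downProd (fun k => (T k)⁻¹) b a = (upProd T a b)⁻¹ := by
  rw [upProd_eq_prod_range', List.prod_inv_reverse, downProd_eq_prod_reverse, List.map_map]
  rfl

section BraidRelations
variable {G : Type*} [Group G]

theorem commute_inv_conj_of_braid {a s t : G} (hst : s * t * s = t * s * t) (has : Commute a s)
    (hat : Commute t (a * t * a)) : Commute s (t⁻¹ * a * t * s * (t⁻¹ * a * t)) := by
  have hconj : t⁻¹ * a * t * s * (t⁻¹ * a * t) = (s * t)⁻¹ * (a * t * a) * (s * t) := by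
    calc t⁻¹ * a * t * s * (t⁻¹ * a * t)
        = t⁻¹ * a * (s⁻¹ * (s * t * s) * t⁻¹) * a * t := by group
      _ = t⁻¹ * (a * s⁻¹) * t * (s * a) * t := by rw [hst]; group
      _ = (s * t)⁻¹ * (a * t * a) * (s * t) := by rw [has.inv_right.eq, ← has.eq]; group
  have hs : (s * t)⁻¹ * t * (s * t) = s := by
    calc (s * t)⁻¹ * t * (s * t) = t⁻¹ * s⁻¹ * (t * s * t) := by group
      _ = s := by rw [← hst]; group
  have h := (Commute.conj_iff (s * t)⁻¹).2 hat
  rwa [inv_inv, hs, ← hconj] at h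

theorem commute_sandwich_of_braid {y s t : G} (hst : s * t * s = t * s * t) (hys : Commute y s)
    (hyt : Commute t (y * t * y)) : Commute s (t * y * t * s * (t * y * t)) := by
  have h : t * y * t * s * (t * y * t) = t * s * (y * t * y) * s * t := by
    calc t * y * t * s * (t * y * t) = t * y * (s * t * s) * y * t := by rw [hst]; group
      _ = t * (y * s) * t * (s * y) * t := by group
      _ = t * (s * y) * t * (y * s) * t := by rw [hys.eq]
      _ = t * s * (y * t * y) * s * t := by group
  rw [h]
  calc s * (t * s * (y * t * y) * s * t) = (s * t * s) * (y * t * y) * s * t := by group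
    _ = t * s * (t * (y * t * y)) * s * t := by rw [hst]; group
    _ = t * s * (y * t * y) * (t * s * t) := by rw [hyt.eq]; group
    _ = t * s * (y * t * y) * s * t * s := by rw [← hst]; group

theorem commute_mul_sandwich_of_braid {s t y : G} (hst : s * t * s = t * s * t)
    (hsy : Commute s y) : Commute t (s * (t * y * t) * s) := by
  calc t * (s * (t * y * t) * s) = (t * s * t) * y * t * s := by group
    _ = s * t * (s * y) * t * s := by rw [← hst]; group
    _ = s * t * y * (s * t * s) := by rw [hsy.eq]; group
    _ = s * (t * y * t) * s * t := by rw [hst]; group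

theorem commute_mul_sandwich_inv_conj_mul {x y t : G} (hxy : Commute x y)
    (hxt : Commute t (x * t * x)) (hyt : Commute t (y * t * y)) :
    Commute (x * (t * y * t)) (t⁻¹ * x * t * y) := by
  have hsq : x * t * y * (x * t * y) = x * t * x * (y * t * y) := by
    calc x * t * y * (x * t * y) = x * t * (y * x) * t * y := by group
      _ = x * t * x * (y * t * y) := by rw [← hxy.eq]; group
  have hz : Commute t (x * t * y * (x * t * y)) := hsq ▸ hxt.mul_right hyt
  calc x * (t * y * t) * (t⁻¹ * x * t * y) = x * t * y * (x * t * y) := by group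
    _ = t⁻¹ * (t * (x * t * y * (x * t * y))) := by group
    _ = t⁻¹ * (x * t * y * (x * t * y) * t) := by rw [hz.eq]
    _ = t⁻¹ * x * t * y * (x * (t * y * t)) := by group

end BraidRelations

namespace AffineBraidC

variable {G : Type*} [Group G]

/-- The relations of `B_n(C⁽¹⁾)`, the two length-four ones written as commutations. -/
structure Relations (n : ℕ) (T : ℕ → G) : Prop where
  braid : ∀ i, 1 ≤ i → i + 2 ≤ n → T i * T (i + 1) * T i = T (i + 1) * T i * T (i + 1)
  commute : ∀ i j, j ≤ n → i + 2 ≤ j → Commute (T i) (T j)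
  commute_zero : Commute (T 1) (T 0 * T 1 * T 0)
  commute_top : Commute (T (n - 1)) (T n * T (n - 1) * T n)

def X (T : ℕ → G) (i : ℕ) : G := (upProd T 1 i)⁻¹ * upProd T 0 i

def Y (n : ℕ) (T : ℕ → G) (i : ℕ) : G := upProd T i n * downProd T (n - 1) i

def J (n : ℕ) (T : ℕ → G) (i : ℕ) : G :=
  downProd (fun k => (T k)⁻¹) (i - 1) 1 * upProd T 0 n * downProd T (n - 1) i

variable {n : ℕ} {T : ℕ → G}

theorem X_zero : X T 0 = T 0 := by
  simp [X, upProd_of_lt, upProd_self]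

theorem X_succ (i : ℕ) : X T (i + 1) = (T (i + 1))⁻¹ * X T i * T (i + 1) := by
  rw [X, X, upProd_succ_top T (by omega), upProd_succ_top T (by omega)]
  group

theorem Y_self (hn : 1 ≤ n) : Y n T n = T n := by
  rw [Y, upProd_self, downProd_of_lt T (by omega), mul_one]

theorem Y_of_lt {i : ℕ} (hin : i < n) : Y n T i = T i * Y n T (i + 1) * T i := by
  rw [Y, Y, upProd_eq_mul_succ_bot T hin.le, downProd_eq_succ_mul T (by omega)]
  group

theorem J_succ_eq_X_mul_Y {i : ℕ} (hin : i + 1 ≤ n) :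
    J n T (i + 1) = X T i * Y n T (i + 1) := by
  rw [J, X, Y, downProd_inv, Nat.add_sub_cancel,
    ← upProd_mul_upProd T (Nat.zero_le _) (by omega : i ≤ n)]
  group

theorem J_succ {i : ℕ} (hi : 1 ≤ i) (hin : i + 1 ≤ n) :
    J n T (i + 1) = (T i)⁻¹ * J n T i * (T i)⁻¹ := by
  obtain ⟨i, rfl⟩ : ∃ m, i = m + 1 := ⟨i - 1, by omega⟩
  rw [J_succ_eq_X_mul_Y hin, J_succ_eq_X_mul_Y (by omega), X_succ, Y_of_lt hin]
  group

theorem commute_X {c : G} {i : ℕ} (h : ∀ k ≤ i, Commute (T k) c) : Commute (X T i) c :=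
  have hc : ∀ a, Commute c (upProd T a i) := fun _ => commute_upProd T fun k _ hk => (h k hk).symm
  ((hc 1).inv_right.mul_right (hc 0)).symm

namespace Relations

theorem commute_T_Y (hT : Relations n T) {m j : ℕ} (hmj : m + 2 ≤ j) :
    Commute (T m) (Y n T j) :=
  (commute_upProd T fun k hk hkn => hT.commute m k hkn (by omega)).mul_right
    (commute_downProd T fun k hk hkn => hT.commute m k (by omega) (by omega))

theorem commute_X_T (hT : Relations n T) {i k : ℕ} (hik : i + 2 ≤ k) (hkn : k ≤ n) :
    Commute (X T i) (T k) :=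
  commute_X fun m hm => hT.commute m k hkn (by omega)

theorem commute_X_Y (hT : Relations n T) {i j : ℕ} (hij : i + 2 ≤ j) :
    Commute (X T i) (Y n T j) :=
  commute_X fun _ hm => hT.commute_T_Y (by omega)

theorem commute_T_X_mul (hT : Relations n T) {i : ℕ} (hin : i + 2 ≤ n) :
    Commute (T (i + 1)) (X T i * T (i + 1) * X T i) := by
  induction i with
  | zero => simpa only [X_zero] using hT.commute_zero
  | succ i ih =>
    rw [X_succ]
    exact commute_inv_conj_of_braid (hT.braid (i + 1) le_add_self (by omega)).symm
      (hT.commute_X_T le_rfl (by omega)) (ih (by omega))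

theorem commute_T_Y_mul (hT : Relations n T) {i : ℕ} (hi : 1 ≤ i) (hin : i + 1 ≤ n) :
    Commute (T i) (Y n T (i + 1) * T i * Y n T (i + 1)) := by
  have hle : i ≤ n - 1 := by omega
  induction hle using Nat.decreasingInduction with
  | self =>
    rw [Nat.sub_add_cancel (by omega), Y_self (by omega)]
    exact hT.commute_top
  | of_succ i hi' ih =>
    rw [Y_of_lt (by omega)]
    exact commute_sandwich_of_braid (hT.braid i hi (by omega)) (hT.commute_T_Y le_rfl).symm
      (ih (by omega) (by omega))

theorem commute_T_Y_of_le (hT : Relations n T) {i k : ℕ} (hi : 1 ≤ i) (hik : i ≤ k)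
    (hkn : k + 2 ≤ n) : Commute (T (k + 1)) (Y n T i) := by
  induction hik using Nat.decreasingInduction with
  | self =>
    rw [Y_of_lt (by omega), Y_of_lt (by omega)]
    exact commute_mul_sandwich_of_braid (hT.braid k hi hkn) (hT.commute_T_Y le_rfl)
  | of_succ i hik ih =>
    have hc : Commute (T (k + 1)) (T i) := (hT.commute i (k + 1) (by omega) (by omega)).symm
    rw [Y_of_lt (by omega)]
    exact (hc.mul_right (ih (by omega))).mul_right hc

theorem commute_T_J (hT : Relations n T) {i k : ℕ} (hi : 1 ≤ i) (hik : i < k)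
    (hkn : k + 1 ≤ n) : Commute (T k) (J n T i) := by
  obtain ⟨i, rfl⟩ : ∃ m, i = m + 1 := ⟨i - 1, by omega⟩
  obtain ⟨k, rfl⟩ : ∃ m, k = m + 1 := ⟨k - 1, by omega⟩
  rw [J_succ_eq_X_mul_Y (by omega)]
  exact (hT.commute_X_T (k := k + 1) (by omega) (by omega)).symm.mul_right
    (hT.commute_T_Y_of_le (k := k) hi (by omega) (by omega))

theorem commute_J_succ (hT : Relations n T) {i : ℕ} (hi : 1 ≤ i) (hin : i + 1 ≤ n) :
    Commute (J n T i) (J n T (i + 1)) := by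
  obtain ⟨i, rfl⟩ : ∃ m, i = m + 1 := ⟨i - 1, by omega⟩
  rw [J_succ_eq_X_mul_Y hin, J_succ_eq_X_mul_Y (by omega), X_succ, Y_of_lt hin]
  exact commute_mul_sandwich_inv_conj_mul (hT.commute_X_Y le_rfl) (hT.commute_T_X_mul hin)
    (hT.commute_T_Y_mul le_add_self hin)

theorem commute_J_of_lt (hT : Relations n T) {i j : ℕ} (hi : 1 ≤ i) (hij : i < j)
    (hjn : j ≤ n) : Commute (J n T i) (J n T j) := by
  induction j, hij using Nat.le_induction with
  | base => exact hT.commute_J_succ hi hjn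
  | succ j hij ih =>
    have hc : Commute (J n T i) (T j) := (hT.commute_T_J hi hij hjn).symm
    rw [J_succ (by omega) hjn]
    exact (hc.inv_right.mul_right (ih (by omega))).mul_right hc.inv_right

theorem commute_J (hT : Relations n T) {i j : ℕ} (hi : 1 ≤ i) (hin : i ≤ n) (hj : 1 ≤ j)
    (hjn : j ≤ n) : Commute (J n T i) (J n T j) := by
  rcases lt_trichotomy i j with hij | rfl | hij
  · exact hT.commute_J_of_lt hi hij hjn
  · exact Commute.refl _
  · exact (hT.commute_J_of_lt hj hij hin).symm

end Relations
end AffineBraidC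

theorem J_commute_general {G : Type*} [Group G] (n : ℕ) (T : ℕ → G)
    (hbraid : ∀ i, 1 ≤ i → i ≤ n - 2 →
      T i * T (i + 1) * T i = T (i + 1) * T i * T (i + 1))
    (hcomm : ∀ i j, i ≤ n → j ≤ n → i + 2 ≤ j → T i * T j = T j * T i)
    (hC0 : T 1 * T 0 * T 1 * T 0 = T 0 * T 1 * T 0 * T 1)
    (hCn : T (n - 1) * T n * T (n - 1) * T n = T n * T (n - 1) * T n * T (n - 1)) :
    ∀ i j, 1 ≤ i → i ≤ n → 1 ≤ j → j ≤ n →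
      (downProd (fun k => (T k)⁻¹) (i - 1) 1 * upProd T 0 n * downProd T (n - 1) i) *
        (downProd (fun k => (T k)⁻¹) (j - 1) 1 * upProd T 0 n * downProd T (n - 1) j) =
      (downProd (fun k => (T k)⁻¹) (j - 1) 1 * upProd T 0 n * downProd T (n - 1) j) *
        (downProd (fun k => (T k)⁻¹) (i - 1) 1 * upProd T 0 n * downProd T (n - 1) i) := by
  have hT : AffineBraidC.Relations n T :=
    { braid := fun i hi hin => hbraid i hi (by omega)
      commute := fun i j hj hij => hcomm i j (by omega) hj hij
      commute_zero := by simpa only [Commute, SemiconjBy, mul_assoc] using hC0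
      commute_top := by simpa only [Commute, SemiconjBy, mul_assoc] using hCn }
  intro i j hi hin hj hjn
  exact (hT.commute_J hi hin hj hjn).eq

/-- The elements
`J_i = (T_{i-1}⁻¹ ⋯ T_1⁻¹) (T_0 T_1 ⋯ T_n) (T_{n-1} ⋯ T_i)` in the affine braid group
of type `C⁽¹⁾` pairwise commute. -/
theorem J_commute {G : Type*} [Group G] (n : ℕ) (hn : 2 ≤ n) (T : ℕ → G)
    (hbraid : ∀ i, 1 ≤ i → i ≤ n - 2 →
      T i * T (i + 1) * T i = T (i + 1) * T i * T (i + 1))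
    (hcomm : ∀ i j, i ≤ n → j ≤ n → i + 2 ≤ j → T i * T j = T j * T i)
    (hC0 : T 1 * T 0 * T 1 * T 0 = T 0 * T 1 * T 0 * T 1)
    (hCn : T (n - 1) * T n * T (n - 1) * T n = T n * T (n - 1) * T n * T (n - 1)) :
    ∀ i j, 1 ≤ i → i ≤ n → 1 ≤ j → j ≤ n →
      (downProd (fun k => (T k)⁻¹) (i - 1) 1 * upProd T 0 n * downProd T (n - 1) i) *
        (downProd (fun k => (T k)⁻¹) (j - 1) 1 * upProd T 0 n * downProd T (n - 1) j) =
      (downProd (fun k => (T k)⁻¹) (j - 1) 1 * upProd T 0 n * downProd T (n - 1) j) *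
        (downProd (fun k => (T k)⁻¹) (i - 1) 1 * upProd T 0 n * downProd T (n - 1) i) :=
  J_commute_general n T hbraid hcomm hC0 hCn
end

section
/- For every 1 ≤ i ≤ n-1 and all nonzero complex numbers u, v with u ≠ v, ν u + q v ≠ 0 and ν v + q u ≠ 0, one has the unitarity relation (u - v)² · T_i(u,v) T_i(v,u) = (u - q² v)(u - q^{-2} v) · 1; equivalently, when (u - q² v)(u - q^{-2} v) ≠ 0, T_i(v,u)^{-1} = T_i(u,v) · f(u,v) with f(u,v) := (u - v)²/((u - q² v)(u - q^{-2} v)). -/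
/-- The BMW element `κ = 1 - (T - T⁻¹)/(q - q⁻¹)` attached to an invertible element `T`. -/
noncomputable def kap {A : Type*} [Ring A] [Algebra ℂ A] (q : ℂ) (x : Aˣ) : A :=
  1 - (q - q⁻¹)⁻¹ • ((x : A) - ((x⁻¹ : Aˣ) : A))

/-- The baxterized element
`T(u,v) = T + (q - q⁻¹)/(v/u - 1) + (q - q⁻¹)/(1 + ν⁻¹ q v/u) · κ`. -/
noncomputable def bax {A : Type*} [Ring A] [Algebra ℂ A] (q ν : ℂ) (x : Aˣ) (u v : ℂ) : A :=
  (x : A) + ((q - q⁻¹) / (v / u - 1)) • (1 : A) +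
    ((q - q⁻¹) / (1 + ν⁻¹ * q * v / u)) • kap q x

/-!
Write `t` for `T_i`, `κ` for `κ_i` and `s = q - q⁻¹`. The definition of `κ` reads
`t - t⁻¹ = s (1 - κ)`; together with `tκ = κt = νκ` this gives the skein relation
`t² = 1 + s t - sν κ` and `κ² = δ κ` with `δ = 1 - (ν - ν⁻¹)/s`. Hence the span of `1, t, κ` is
closed under multiplication, and a product of two elements `t + a + bκ` is computed
coefficientwise. For `T_i(u,v) T_i(v,u)` the coefficients of `t` and of `κ` vanish by rational
function identities in `q, ν, u, v`, while the coefficient of `1` is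
`(u - q²v)(u - q⁻²v)/(u - v)²`.
-/

theorem add_smul_one_add_smul_mul {R A : Type*} [CommRing R] [Ring A] [Algebra R A]
    {t k : A} {s ν δ : R} (ht : t * t = 1 + s • t - (s * ν) • k) (htk : t * k = ν • k)
    (hkt : k * t = ν • k) (hk : k * k = δ • k) (a a' b b' : R) :
    (t + a • 1 + b • k) * (t + a' • 1 + b' • k) =
      (1 + a * a') • 1 + (s + a + a') • t +
        (a * b' + a' * b + ν * (b + b') - s * ν + b * b' * δ) • k := by
  simp only [mul_add, add_mul, smul_mul_assoc, mul_smul_comm, ht, htk, hkt, hk, smul_smul,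
    one_mul, mul_one]
  module

section Kap

variable {A : Type*} [Ring A] [Algebra ℂ A] {q ν : ℂ} (x : Aˣ)

theorem coe_sub_coe_inv_eq_smul_one_sub_kap (hq : q - q⁻¹ ≠ 0) :
    (x : A) - ↑x⁻¹ = (q - q⁻¹) • (1 - kap q x) := by
  rw [kap, sub_sub_cancel, smul_smul, mul_inv_cancel₀ hq, one_smul]

theorem coe_mul_self_eq_of_coe_mul_kap (hq : q - q⁻¹ ≠ 0) (h : (x : A) * kap q x = ν • kap q x) :
    (x : A) * x = 1 + (q - q⁻¹) • (x : A) - ((q - q⁻¹) * ν) • kap q x := by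
  have h' : (x : A) * x - 1 = x * (x - ↑x⁻¹) := by rw [mul_sub, Units.mul_inv]
  rw [coe_sub_coe_inv_eq_smul_one_sub_kap x hq, mul_smul_comm, mul_sub, mul_one, h] at h'
  linear_combination (norm := module) h'

theorem kap_mul_coe_inv_of_kap_mul_coe (hν : ν ≠ 0) (h : kap q x * x = ν • kap q x) :
    kap q x * ↑x⁻¹ = ν⁻¹ • kap q x :=
  calc kap q x * ↑x⁻¹ = ν⁻¹ • (kap q x * x) * ↑x⁻¹ := by
        rw [h, smul_smul, inv_mul_cancel₀ hν, one_smul]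
    _ = ν⁻¹ • kap q x := by rw [smul_mul_assoc, mul_assoc, Units.mul_inv, mul_one]

theorem kap_mul_self_of_kap_mul_coe (hq : q - q⁻¹ ≠ 0) (hν : ν ≠ 0)
    (h : kap q x * x = ν • kap q x) :
    kap q x * kap q x = ((q - q⁻¹)⁻¹ * (q - q⁻¹ - ν + ν⁻¹)) • kap q x := by
  have h' := congrArg (kap q x * ·) (coe_sub_coe_inv_eq_smul_one_sub_kap x hq)
  simp only [mul_sub, h, kap_mul_coe_inv_of_kap_mul_coe x hν h, mul_smul_comm, mul_one] at h'
  apply smul_right_injective A hq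
  simp only [smul_smul, mul_inv_cancel_left₀ hq]
  linear_combination (norm := module) h'

theorem bax_eq {u v : ℂ} (hν : ν ≠ 0) (hu : u ≠ 0) (h : ν * u + q * v ≠ 0) :
    bax q ν x u v = x + ((q - q⁻¹) * u / (v - u)) • 1 +
      ((q - q⁻¹) * (ν * u) / (ν * u + q * v)) • kap q x := by
  have ha : (q - q⁻¹) / (v / u - 1) = (q - q⁻¹) * u / (v - u) := by field_simp
  have hb : (q - q⁻¹) / (1 + ν⁻¹ * q * v / u) = (q - q⁻¹) * (ν * u) / (ν * u + q * v) := by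
    field_simp
  rw [bax, ha, hb]

theorem bax_kap_coeff_eq_zero {q ν u v s : ℂ} (hs : s = q - q⁻¹) (hq : q ≠ 0) (hq1 : q ^ 2 ≠ 1)
    (hν : ν ≠ 0) (huv : u ≠ v) (h1 : ν * u + q * v ≠ 0) (h2 : ν * v + q * u ≠ 0) :
    s * u / (v - u) * (s * (ν * v) / (ν * v + q * u)) +
        s * v / (u - v) * (s * (ν * u) / (ν * u + q * v)) +
        ν * (s * (ν * u) / (ν * u + q * v) + s * (ν * v) / (ν * v + q * u)) - s * ν +
        s * (ν * u) / (ν * u + q * v) * (s * (ν * v) / (ν * v + q * u)) *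
          (s⁻¹ * (s - ν + ν⁻¹)) = 0 := by
  have hs' : s = (q ^ 2 - 1) / q := by rw [hs]; field_simp
  have hq1' : q ^ 2 - 1 ≠ 0 := sub_ne_zero.mpr hq1
  have hvu : v - u ≠ 0 := sub_ne_zero.mpr huv.symm
  have h1' : u * ν + q * v ≠ 0 := by rwa [mul_comm]
  have h2' : v * ν + q * u ≠ 0 := by rwa [mul_comm]
  rw [hs']
  field_simp
  ring

theorem sub_sq_smul_bax_mul_bax {u v : ℂ} (hq : q ≠ 0) (hq1 : q ^ 2 ≠ 1) (hν : ν ≠ 0)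
    (hkx : kap q x * x = ν • kap q x) (hxk : (x : A) * kap q x = ν • kap q x)
    (hu : u ≠ 0) (hv : v ≠ 0) (huv : u ≠ v) (h1 : ν * u + q * v ≠ 0) (h2 : ν * v + q * u ≠ 0) :
    (u - v) ^ 2 • (bax q ν x u v * bax q ν x v u) =
      ((u - q ^ 2 * v) * (u - (q ^ 2)⁻¹ * v)) • 1 := by
  have hs : q - q⁻¹ ≠ 0 := by
    intro h; apply hq1; field_simp at h; linear_combination h
  have hvu : v - u ≠ 0 := sub_ne_zero.mpr huv.symm
  have ht_coeff : q - q⁻¹ + (q - q⁻¹) * u / (v - u) + (q - q⁻¹) * v / (u - v) = 0 := by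
    field_simp; ring
  have hone_coeff : (u - v) ^ 2 * (1 + (q - q⁻¹) * u / (v - u) * ((q - q⁻¹) * v / (u - v))) =
      (u - q ^ 2 * v) * (u - (q ^ 2)⁻¹ * v) := by
    field_simp; ring
  rw [bax_eq x hν hu h1, bax_eq x hν hv h2,
    add_smul_one_add_smul_mul (coe_mul_self_eq_of_coe_mul_kap x hs hxk) hxk hkx
      (kap_mul_self_of_kap_mul_coe x hs hν hkx),
    ht_coeff, bax_kap_coeff_eq_zero rfl hq hq1 hν huv h1 h2, zero_smul, zero_smul, add_zero,
    add_zero, smul_smul, hone_coeff]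

end Kap

section Inverse

variable {R A : Type*} [Field R] [Ring A] [Algebra R A] {x y : A} {c d : R}

theorem mul_div_smul_eq_one (hd : d ≠ 0) (h : c • (x * y) = d • 1) : x * ((c / d) • y) = 1 := by
  rw [mul_smul_comm, div_eq_inv_mul, mul_smul, h, smul_smul, inv_mul_cancel₀ hd, one_smul]

theorem div_smul_mul_eq_one (hd : d ≠ 0) (h : c • (x * y) = d • 1) : (c / d) • x * y = 1 := by
  rw [smul_mul_assoc, div_eq_inv_mul, mul_smul, h, smul_smul, inv_mul_cancel₀ hd, one_smul]

end Inverse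

theorem bax_unitarity_general {A : Type*} [Ring A] [Algebra ℂ A] (n : ℕ)
    (q ν : ℂ) (hq0 : q ≠ 0) (hν0 : ν ≠ 0) (hq1 : q ^ 2 ≠ 1)
    (T : ℕ → Aˣ)
    (hκT : ∀ i, 1 ≤ i → i + 1 ≤ n →
      kap q (T i) * (T i : A) = ν • kap q (T i) ∧ (T i : A) * kap q (T i) = ν • kap q (T i)) :
    ∀ i, 1 ≤ i → i + 1 ≤ n → ∀ u v : ℂ,
      u ≠ 0 → v ≠ 0 → u ≠ v → ν * u + q * v ≠ 0 → ν * v + q * u ≠ 0 →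
      ((u - v) ^ 2) • (bax q ν (T i) u v * bax q ν (T i) v u) =
        ((u - q ^ 2 * v) * (u - (q ^ 2)⁻¹ * v)) • (1 : A) ∧
      ((u - q ^ 2 * v) * (u - (q ^ 2)⁻¹ * v) ≠ 0 →
        bax q ν (T i) v u *
            (((u - v) ^ 2 / ((u - q ^ 2 * v) * (u - (q ^ 2)⁻¹ * v))) • bax q ν (T i) u v) = 1 ∧
        (((u - v) ^ 2 / ((u - q ^ 2 * v) * (u - (q ^ 2)⁻¹ * v))) • bax q ν (T i) u v) *
            bax q ν (T i) v u = 1) := by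
  intro i hi hin u v hu hv huv h1 h2
  obtain ⟨hkx, hxk⟩ := hκT i hi hin
  have hprod := sub_sq_smul_bax_mul_bax (T i) hq0 hq1 hν0 hkx hxk hu hv huv h1 h2
  have hsymm : (v - q ^ 2 * u) * (v - (q ^ 2)⁻¹ * u) = (u - q ^ 2 * v) * (u - (q ^ 2)⁻¹ * v) := by
    field_simp; ring
  have hprod_swap : (u - v) ^ 2 • (bax q ν (T i) v u * bax q ν (T i) u v) =
      ((u - q ^ 2 * v) * (u - (q ^ 2)⁻¹ * v)) • (1 : A) := by
    rw [← neg_sub v u, neg_sq, ← hsymm]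
    exact sub_sq_smul_bax_mul_bax (T i) hq0 hq1 hν0 hkx hxk hv hu huv.symm h2 h1
  exact ⟨hprod, fun hd => ⟨mul_div_smul_eq_one hd hprod_swap, div_smul_mul_eq_one hd hprod⟩⟩

/-- Unitarity of the baxterized BMW elements:
`(u - v)² T_i(u,v) T_i(v,u) = (u - q²v)(u - q⁻²v) · 1`, and when the right-hand scalar is
nonzero, `f(u,v) T_i(u,v)` is the two-sided inverse of `T_i(v,u)`,
`f(u,v) = (u - v)²/((u - q²v)(u - q⁻²v))`. -/
theorem bax_unitarity {A : Type*} [Ring A] [Algebra ℂ A] (n : ℕ) (hn : 3 ≤ n)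
    (q ν : ℂ) (hq0 : q ≠ 0) (hν0 : ν ≠ 0) (hq1 : q ^ 2 ≠ 1)
    (T : ℕ → Aˣ)
    (hbraid : ∀ i, 1 ≤ i → i + 2 ≤ n →
      (T i : A) * (T (i + 1) : A) * (T i : A) = (T (i + 1) : A) * (T i : A) * (T (i + 1) : A))
    (hcomm : ∀ i j, 1 ≤ i → j + 1 ≤ n → i + 2 ≤ j → (T i : A) * (T j : A) = (T j : A) * (T i : A))
    (hκT : ∀ i, 1 ≤ i → i + 1 ≤ n →
      kap q (T i) * (T i : A) = ν • kap q (T i) ∧ (T i : A) * kap q (T i) = ν • kap q (T i))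
    (hκdown : ∀ i, 2 ≤ i → i + 1 ≤ n →
      kap q (T i) * (T (i - 1) : A) * kap q (T i) = ν⁻¹ • kap q (T i) ∧
      kap q (T i) * (((T (i - 1))⁻¹ : Aˣ) : A) * kap q (T i) = ν • kap q (T i))
    (hκup : ∀ i, 1 ≤ i → i + 2 ≤ n →
      kap q (T i) * (T (i + 1) : A) * kap q (T i) = ν⁻¹ • kap q (T i) ∧
      kap q (T i) * (((T (i + 1))⁻¹ : Aˣ) : A) * kap q (T i) = ν • kap q (T i)) :
    ∀ i, 1 ≤ i → i + 1 ≤ n → ∀ u v : ℂ,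
      u ≠ 0 → v ≠ 0 → u ≠ v → ν * u + q * v ≠ 0 → ν * v + q * u ≠ 0 →
      ((u - v) ^ 2) • (bax q ν (T i) u v * bax q ν (T i) v u) =
        ((u - q ^ 2 * v) * (u - (q ^ 2)⁻¹ * v)) • (1 : A) ∧
      ((u - q ^ 2 * v) * (u - (q ^ 2)⁻¹ * v) ≠ 0 →
        bax q ν (T i) v u *
            (((u - v) ^ 2 / ((u - q ^ 2 * v) * (u - (q ^ 2)⁻¹ * v))) • bax q ν (T i) u v) = 1 ∧
        (((u - v) ^ 2 / ((u - q ^ 2 * v) * (u - (q ^ 2)⁻¹ * v))) • bax q ν (T i) u v) *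
            bax q ν (T i) v u = 1) :=
  bax_unitarity_general n q ν hq0 hν0 hq1 T hκT
end
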